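/- Let f, g be nondecreasing usc functions from S to [0,1] with 0 ∈ S. For every ρ ∈ [0, ∞], d̂l_ρ(f, g) e^{−ρ} ≤ dl(f, g) ≤ e^{−ρ} + (1 − e^{−ρ}) d̂l_{2ρ}(f, g), where dl(f, g) = ∫₀^∞ dl_τ(f, g) e^{−τ} dτ. -/

import Mathlib

/-! Split `dl(f,g) = ∫₀^∞ dl_τ(f,g) e^{-τ} dτ` at `τ = ρ`. Since `τ ↦ dl_τ` is nondecreasing with
values in `[0,1]`, the tail `∫_ρ^∞` lies between `dl_ρ e^{-ρ}` and `e^{-ρ}` and the head `∫_0^ρ` is at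
most `(1 - e^{-ρ}) dl_ρ`; it remains to compare `d̂l_ρ ≤ dl_ρ ≤ d̂l_{2ρ}`. The first inequality holds
because a point within distance `dl_ρ` of a set lies in its `(dl_ρ + ε)`-enlargement; the second
because both hypographs contain the origin, so the distance from a point of norm `≤ ρ` to either of
them does not change when the hypograph is cut down to the ball of radius `2ρ`. -/

open Metric Set Filter Pointwise

/-- The hypograph of `f` restricted to `S`, as a subset of `(Fin m → ℝ) × ℝ`
(carrying the max-norm, since both the `Pi` and `Prod` norms are sup-norms). -/
def hypo {m : ℕ} (S : Set (Fin m → ℝ)) (f : (Fin m → ℝ) → ℝ) :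
    Set ((Fin m → ℝ) × ℝ) :=
  {p | p.1 ∈ S ∧ p.2 ≤ f p.1}

/-- The truncated ρ-hypo-distance
`dl_ρ(f,g) = sup { |dist(x̄, hypo f) − dist(x̄, hypo g)| : ‖x̄‖ ≤ ρ }`. -/
noncomputable def dlrho {m : ℕ} (S : Set (Fin m → ℝ)) (f g : (Fin m → ℝ) → ℝ)
    (ρ : ℝ) : ℝ :=
  sSup ((fun p => |Metric.infDist p (hypo S f) - Metric.infDist p (hypo S g)|) ''
    {p : (Fin m → ℝ) × ℝ | ‖p‖ ≤ ρ})

/-- The hypo-distance `dl(f,g) = ∫₀^∞ dl_ρ(f,g) e^{−ρ} dρ`. -/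
noncomputable def dl {m : ℕ} (S : Set (Fin m → ℝ)) (f g : (Fin m → ℝ) → ℝ) : ℝ :=
  ∫ ρ in Set.Ioi (0 : ℝ), dlrho S f g ρ * Real.exp (-ρ)

/-- The Attouch–Wets hat-distance
`d̂l_ρ(f,g) = inf{η ≥ 0 : hypo f ∩ ρ𝕊 ⊆ hypo g + η𝕊 and hypo g ∩ ρ𝕊 ⊆ hypo f + η𝕊}`. -/
noncomputable def hatdl {m : ℕ} (S : Set (Fin m → ℝ)) (f g : (Fin m → ℝ) → ℝ)
    (ρ : ℝ) : ℝ :=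
  sInf {η : ℝ | 0 ≤ η ∧
    hypo S f ∩ Metric.closedBall (0 : (Fin m → ℝ) × ℝ) ρ ⊆ hypo S g + Metric.closedBall (0 : (Fin m → ℝ) × ℝ) η ∧
    hypo S g ∩ Metric.closedBall (0 : (Fin m → ℝ) × ℝ) ρ ⊆ hypo S f + Metric.closedBall (0 : (Fin m → ℝ) × ℝ) η}

open MeasureTheory

section InfDist

variable {E : Type*} [SeminormedAddCommGroup E] {A B C : Set E} {x : E} {d η ε r : ℝ}

lemma Metric.infDist_le_infDist_add_of_subset_add_closedBall (hB : B.Nonempty)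
    (h : B ⊆ A + closedBall 0 η) : infDist x A ≤ infDist x B + η := by
  rw [← sub_le_iff_le_add, le_infDist hB]
  rintro _ hy
  obtain ⟨a, ha, c, hc, rfl⟩ := h hy
  have hc : ‖c‖ ≤ η := mem_closedBall_zero_iff.mp hc
  calc infDist x A - η ≤ dist x a - ‖c‖ := by
        gcongr
        exact infDist_le_dist_of_mem ha
    _ ≤ dist x (a + c) := by
        have := dist_triangle x (a + c) a
        rw [dist_self_add_left] at this
        linarith

lemma Metric.subset_add_closedBall_of_forall_infDist_le (hB : B.Nonempty)
    (h : ∀ y ∈ C, infDist y B ≤ d) (hε : 0 < ε) : C ⊆ B + closedBall 0 (d + ε) := by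
  intro y hy
  have : y ∈ thickening (d + ε) B :=
    (mem_thickening_iff_infDist_lt hB).2 (by linarith [h y hy])
  rw [← add_ball_zero] at this
  exact add_subset_add_left ball_subset_closedBall this

/-- Points of `A` farther than `2‖x‖` from the origin are farther from `x` than `0 ∈ A` is. -/
lemma Metric.infDist_inter_closedBall_of_two_mul_norm_le (h0 : (0 : E) ∈ A)
    (hr : 2 * ‖x‖ ≤ r) : infDist x (A ∩ closedBall 0 r) = infDist x A := by
  have h0r : (0 : E) ∈ A ∩ closedBall 0 r :=
    ⟨h0, mem_closedBall_self (by linarith [norm_nonneg x])⟩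
  refine le_antisymm ((le_infDist ⟨0, h0⟩).2 fun y hy => ?_)
    (infDist_le_infDist_of_subset inter_subset_left ⟨0, h0r⟩)
  by_cases hyr : ‖y‖ ≤ r
  · exact infDist_le_dist_of_mem ⟨hy, mem_closedBall_zero_iff.2 hyr⟩
  · calc infDist x (A ∩ closedBall 0 r) ≤ dist x 0 := infDist_le_dist_of_mem h0r
      _ ≤ dist x y := by
        rw [dist_zero_right, dist_comm, dist_eq_norm]
        linarith [norm_sub_norm_le y x]

lemma Metric.infDist_le_infDist_add_of_inter_closedBall_subset (h0 : (0 : E) ∈ B)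
    (hx : ‖x‖ ≤ r) (h : B ∩ closedBall 0 (2 * r) ⊆ A + closedBall 0 η) :
    infDist x A ≤ infDist x B + η := by
  have hr : 2 * ‖x‖ ≤ 2 * r := by linarith
  calc infDist x A ≤ infDist x (B ∩ closedBall 0 (2 * r)) + η :=
        infDist_le_infDist_add_of_subset_add_closedBall
          ⟨0, h0, mem_closedBall_self (by linarith [norm_nonneg x])⟩ h
    _ = infDist x B + η := by rw [infDist_inter_closedBall_of_two_mul_norm_le h0 hr]

end InfDist

section ExpWeightedIntegral

variable {φ : ℝ → ℝ} {ρ : ℝ}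

lemma integrableOn_mul_exp_neg (hφ : Monotone φ) (hφ0 : ∀ τ, 0 ≤ φ τ) (hφ1 : ∀ τ, φ τ ≤ 1)
    (a : ℝ) : IntegrableOn (fun τ => φ τ * Real.exp (-τ)) (Ioi a) := by
  refine (integrableOn_exp_neg_Ioi a).mono' ?_ (.of_forall fun τ => ?_)
  · exact (hφ.measurable.mul (Real.measurable_exp.comp measurable_neg)).aestronglyMeasurable
  · rw [norm_mul, Real.norm_of_nonneg (hφ0 τ), Real.norm_of_nonneg (Real.exp_pos _).le]
    exact mul_le_of_le_one_left (Real.exp_pos _).le (hφ1 τ)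

lemma mul_exp_neg_le_integral_mul_exp_neg (hφ : Monotone φ) (hφ0 : ∀ τ, 0 ≤ φ τ)
    (hφ1 : ∀ τ, φ τ ≤ 1) (hρ : 0 ≤ ρ) :
    φ ρ * Real.exp (-ρ) ≤ ∫ τ in Ioi 0, φ τ * Real.exp (-τ) :=
  calc φ ρ * Real.exp (-ρ) = ∫ τ in Ioi ρ, φ ρ * Real.exp (-τ) := by
        rw [integral_const_mul, integral_exp_neg_Ioi]
    _ ≤ ∫ τ in Ioi ρ, φ τ * Real.exp (-τ) :=
        setIntegral_mono_on ((integrableOn_exp_neg_Ioi ρ).const_mul _)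
          (integrableOn_mul_exp_neg hφ hφ0 hφ1 ρ) measurableSet_Ioi
          fun τ hτ => by gcongr; exact hφ (le_of_lt hτ)
    _ ≤ ∫ τ in Ioi 0, φ τ * Real.exp (-τ) :=
        setIntegral_mono_set (integrableOn_mul_exp_neg hφ hφ0 hφ1 0)
          (.of_forall fun τ => mul_nonneg (hφ0 τ) (Real.exp_pos _).le)
          (Ioi_subset_Ioi hρ).eventuallyLE

lemma integral_mul_exp_neg_le (hφ : Monotone φ) (hφ0 : ∀ τ, 0 ≤ φ τ) (hφ1 : ∀ τ, φ τ ≤ 1)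
    (hρ : 0 ≤ ρ) :
    ∫ τ in Ioi 0, φ τ * Real.exp (-τ) ≤ Real.exp (-ρ) + (1 - Real.exp (-ρ)) * φ ρ := by
  have hint := integrableOn_mul_exp_neg hφ hφ0 hφ1
  calc ∫ τ in Ioi 0, φ τ * Real.exp (-τ)
        = (∫ τ in (0)..ρ, φ τ * Real.exp (-τ)) + ∫ τ in Ioi ρ, φ τ * Real.exp (-τ) :=
          (intervalIntegral.integral_interval_add_Ioi (hint 0) (hint ρ)).symm
    _ ≤ (∫ τ in (0)..ρ, φ ρ * Real.exp (-τ)) + ∫ τ in Ioi ρ, Real.exp (-τ) := by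
        gcongr ?_ + ?_
        · refine intervalIntegral.integral_mono_on hρ ?_ ?_ fun τ hτ => ?_
          · exact (intervalIntegrable_iff_integrableOn_Ioc_of_le hρ).2
              ((hint 0).mono_set Ioc_subset_Ioi_self)
          · exact (Real.continuous_exp.comp continuous_neg).intervalIntegrable _ _ |>.const_mul _
          · gcongr; exact hφ hτ.2
        · exact setIntegral_mono_on (hint ρ) (integrableOn_exp_neg_Ioi ρ) measurableSet_Ioi
            fun τ _ => mul_le_of_le_one_left (Real.exp_pos _).le (hφ1 τ)
    _ = Real.exp (-ρ) + (1 - Real.exp (-ρ)) * φ ρ := by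
        rw [intervalIntegral.integral_const_mul,
          ← intervalIntegral.integral_Ioi_sub_Ioi (integrableOn_exp_neg_Ioi 0) hρ,
          integral_exp_neg_Ioi_zero, integral_exp_neg_Ioi]
        ring

end ExpWeightedIntegral

section Hypo

variable {m : ℕ} {S : Set (Fin m → ℝ)} {f g : (Fin m → ℝ) → ℝ} {ρ : ℝ}

lemma zero_mem_hypo (h0S : (0 : Fin m → ℝ) ∈ S) (hf0 : 0 ≤ f 0) :
    (0 : (Fin m → ℝ) × ℝ) ∈ hypo S f :=
  ⟨h0S, hf0⟩

lemma hypo_subset_hypo_add_closedBall_one (hf0 : ∀ x ∈ S, 0 ≤ f x) (hg1 : ∀ x ∈ S, g x ≤ 1) :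
    hypo S g ⊆ hypo S f + closedBall 0 1 := by
  rintro ⟨x, t⟩ ⟨hxS, ht⟩
  refine ⟨(x, t - 1), ⟨hxS, ?_⟩, (0, 1), ?_, by simp⟩
  · linarith [hf0 x hxS, hg1 x hxS, show t ≤ g x from ht]
  · simp [Prod.norm_def]

lemma abs_infDist_hypo_sub_le_one (h0S : (0 : Fin m → ℝ) ∈ S)
    (hf01 : ∀ x ∈ S, f x ∈ Icc (0 : ℝ) 1) (hg01 : ∀ x ∈ S, g x ∈ Icc (0 : ℝ) 1)
    (p : (Fin m → ℝ) × ℝ) : |infDist p (hypo S f) - infDist p (hypo S g)| ≤ 1 := by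
  have hfg := infDist_le_infDist_add_of_subset_add_closedBall (x := p)
    ⟨0, zero_mem_hypo h0S (hg01 0 h0S).1⟩
    (hypo_subset_hypo_add_closedBall_one (fun x hx => (hf01 x hx).1) fun x hx => (hg01 x hx).2)
  have hgf := infDist_le_infDist_add_of_subset_add_closedBall (x := p)
    ⟨0, zero_mem_hypo h0S (hf01 0 h0S).1⟩
    (hypo_subset_hypo_add_closedBall_one (fun x hx => (hg01 x hx).1) fun x hx => (hf01 x hx).2)
  rw [abs_sub_le_iff]
  constructor <;> linarith

lemma abs_infDist_hypo_sub_le_dlrho (h0S : (0 : Fin m → ℝ) ∈ S)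
    (hf01 : ∀ x ∈ S, f x ∈ Icc (0 : ℝ) 1) (hg01 : ∀ x ∈ S, g x ∈ Icc (0 : ℝ) 1)
    {p : (Fin m → ℝ) × ℝ} (hp : ‖p‖ ≤ ρ) :
    |infDist p (hypo S f) - infDist p (hypo S g)| ≤ dlrho S f g ρ :=
  le_csSup ⟨1, forall_mem_image.2 fun q _ => abs_infDist_hypo_sub_le_one h0S hf01 hg01 q⟩
    (mem_image_of_mem _ hp)

lemma dlrho_nonneg : 0 ≤ dlrho S f g ρ :=
  Real.sSup_nonneg (forall_mem_image.2 fun _ _ => abs_nonneg _)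

lemma dlrho_le_one (h0S : (0 : Fin m → ℝ) ∈ S)
    (hf01 : ∀ x ∈ S, f x ∈ Icc (0 : ℝ) 1) (hg01 : ∀ x ∈ S, g x ∈ Icc (0 : ℝ) 1) :
    dlrho S f g ρ ≤ 1 :=
  Real.sSup_le (forall_mem_image.2 fun p _ => abs_infDist_hypo_sub_le_one h0S hf01 hg01 p)
    zero_le_one

lemma monotone_dlrho (h0S : (0 : Fin m → ℝ) ∈ S)
    (hf01 : ∀ x ∈ S, f x ∈ Icc (0 : ℝ) 1) (hg01 : ∀ x ∈ S, g x ∈ Icc (0 : ℝ) 1) :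
    Monotone (dlrho S f g) := fun _ _ hab =>
  Real.sSup_le (forall_mem_image.2 fun _ hp =>
    abs_infDist_hypo_sub_le_dlrho h0S hf01 hg01 (le_trans hp hab)) dlrho_nonneg

lemma hatdl_nonneg : 0 ≤ hatdl S f g ρ :=
  Real.sInf_nonneg fun _ hη => hη.1

lemma hatdl_le_dlrho (h0S : (0 : Fin m → ℝ) ∈ S)
    (hf01 : ∀ x ∈ S, f x ∈ Icc (0 : ℝ) 1) (hg01 : ∀ x ∈ S, g x ∈ Icc (0 : ℝ) 1) :
    hatdl S f g ρ ≤ dlrho S f g ρ := by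
  refine le_of_forall_pos_le_add fun ε hε => csInf_le ⟨0, fun _ hη => hη.1⟩
    ⟨add_nonneg dlrho_nonneg hε.le, ?_, ?_⟩
  · refine subset_add_closedBall_of_forall_infDist_le ⟨0, zero_mem_hypo h0S (hg01 0 h0S).1⟩
      (fun p hp => ?_) hε
    have := abs_infDist_hypo_sub_le_dlrho h0S hf01 hg01 (mem_closedBall_zero_iff.1 hp.2)
    rwa [infDist_zero_of_mem hp.1, zero_sub, abs_neg, abs_of_nonneg infDist_nonneg] at this
  · refine subset_add_closedBall_of_forall_infDist_le ⟨0, zero_mem_hypo h0S (hf01 0 h0S).1⟩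
      (fun p hp => ?_) hε
    have := abs_infDist_hypo_sub_le_dlrho h0S hf01 hg01 (mem_closedBall_zero_iff.1 hp.2)
    rwa [infDist_zero_of_mem hp.1, sub_zero, abs_of_nonneg infDist_nonneg] at this

lemma dlrho_le_hatdl_two_mul (h0S : (0 : Fin m → ℝ) ∈ S)
    (hf01 : ∀ x ∈ S, f x ∈ Icc (0 : ℝ) 1) (hg01 : ∀ x ∈ S, g x ∈ Icc (0 : ℝ) 1) :
    dlrho S f g ρ ≤ hatdl S f g (2 * ρ) := by
  have hf0 : (0 : (Fin m → ℝ) × ℝ) ∈ hypo S f := zero_mem_hypo h0S (hf01 0 h0S).1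
  have hg0 : (0 : (Fin m → ℝ) × ℝ) ∈ hypo S g := zero_mem_hypo h0S (hg01 0 h0S).1
  have hone : (1 : ℝ) ∈ {η : ℝ | 0 ≤ η ∧
      hypo S f ∩ closedBall 0 (2 * ρ) ⊆ hypo S g + closedBall 0 η ∧
      hypo S g ∩ closedBall 0 (2 * ρ) ⊆ hypo S f + closedBall 0 η} :=
    ⟨zero_le_one,
      inter_subset_left.trans (hypo_subset_hypo_add_closedBall_one
        (fun x hx => (hg01 x hx).1) fun x hx => (hf01 x hx).2),
      inter_subset_left.trans (hypo_subset_hypo_add_closedBall_one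
        (fun x hx => (hf01 x hx).1) fun x hx => (hg01 x hx).2)⟩
  refine Real.sSup_le (forall_mem_image.2 fun p hp => le_csInf ⟨1, hone⟩ ?_) hatdl_nonneg
  rintro η ⟨-, hfg, hgf⟩
  have := infDist_le_infDist_add_of_inter_closedBall_subset hf0 hp hfg
  have := infDist_le_infDist_add_of_inter_closedBall_subset hg0 hp hgf
  rw [abs_sub_le_iff]
  constructor <;> linarith

end Hypo

theorem stmt6_general {m : ℕ} (S : Set (Fin m → ℝ))
    (h0S : (0 : Fin m → ℝ) ∈ S) (f g : (Fin m → ℝ) → ℝ)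
    (hf01 : ∀ x ∈ S, f x ∈ Set.Icc (0 : ℝ) 1) (hg01 : ∀ x ∈ S, g x ∈ Set.Icc (0 : ℝ) 1) :
    ∀ ρ : ℝ, 0 ≤ ρ →
      hatdl S f g ρ * Real.exp (-ρ) ≤ dl S f g ∧
      dl S f g ≤ Real.exp (-ρ) + (1 - Real.exp (-ρ)) * hatdl S f g (2 * ρ) := by
  intro ρ hρ
  have hmono := monotone_dlrho h0S hf01 hg01
  have hle_one : ∀ τ, dlrho S f g τ ≤ 1 := fun _ => dlrho_le_one h0S hf01 hg01
  constructor
  · calc hatdl S f g ρ * Real.exp (-ρ) ≤ dlrho S f g ρ * Real.exp (-ρ) := by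
          gcongr
          exact hatdl_le_dlrho h0S hf01 hg01
      _ ≤ dl S f g :=
          mul_exp_neg_le_integral_mul_exp_neg hmono (fun _ => dlrho_nonneg) hle_one hρ
  · calc dl S f g ≤ Real.exp (-ρ) + (1 - Real.exp (-ρ)) * dlrho S f g ρ :=
          integral_mul_exp_neg_le hmono (fun _ => dlrho_nonneg) hle_one hρ
      _ ≤ Real.exp (-ρ) + (1 - Real.exp (-ρ)) * hatdl S f g (2 * ρ) := by
          have : Real.exp (-ρ) ≤ 1 := Real.exp_le_one_iff.2 (by linarith)
          gcongr
          exact dlrho_le_hatdl_two_mul h0S hf01 hg01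

/-- Let f, g be nondecreasing usc functions from S to [0,1] with 0 ∈ S.  For
every ρ ∈ [0,∞), d̂l_ρ(f,g) e^{−ρ} ≤ dl(f,g) ≤ e^{−ρ} + (1 − e^{−ρ}) d̂l_{2ρ}(f,g),
where dl(f,g) = ∫₀^∞ dl_τ(f,g) e^{−τ} dτ. -/
theorem stmt6 {m : ℕ} (S : Set (Fin m → ℝ)) (hS : IsClosed S)
    (h0S : (0 : Fin m → ℝ) ∈ S) (f g : (Fin m → ℝ) → ℝ)
    (hf : UpperSemicontinuousOn f S) (hg : UpperSemicontinuousOn g S)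
    (hfmono : MonotoneOn f S) (hgmono : MonotoneOn g S)
    (hf01 : ∀ x ∈ S, f x ∈ Set.Icc (0 : ℝ) 1) (hg01 : ∀ x ∈ S, g x ∈ Set.Icc (0 : ℝ) 1) :
    ∀ ρ : ℝ, 0 ≤ ρ →
      hatdl S f g ρ * Real.exp (-ρ) ≤ dl S f g ∧
      dl S f g ≤ Real.exp (-ρ) + (1 - Real.exp (-ρ)) * hatdl S f g (2 * ρ) :=
  stmt6_general S h0S f g hf01 hg01
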